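/- arXiv:2004.08649 — 3 statements merged into one kernel-verified Lean document; each statement's English description precedes it below -/
import Mathlib

section
/- Let θ₁ > 0, θ₂ ≥ 0, ϑ > 0 be real numbers and let μ be a positive integer. Define f : ℝ → ℝ by f(s) = (θ₁^μ e^{-θ₂} / ϑ^μ) · Σ_{l=0}^∞ (θ₁^l θ₂^l) / (ϑ^l (μ+l-1)! l!) · s^{μ-1+l} e^{-θ₁ s / ϑ} for s ≥ 0. Then for every x ≥ 0, ∫_x^∞ f(s) ds = e^{-θ₂} · Σ_{l=0}^∞ (θ₂^l / l!) · Σ_{n=0}^{l+μ-1} (1/n!) (θ₁ x / ϑ)^n e^{-θ₁ x / ϑ}. -/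
/-!
Expanding the Bessel series exhibits the received power as a Poisson(θ₂) mixture of Erlang laws
with rate θ₁/ϑ and shapes l + μ. The Erlang tail is a Poisson distribution function:
`s ↦ e^{-cs} ∑_{n ≤ k} (cs)^n / n!` has derivative `-c^{k+1} s^k e^{-cs} / k!`, because the
derivative of the partial exponential sum telescopes against the derivative of `e^{-cs}`.
All terms of the mixture are nonnegative and their integrals are bounded by the Poisson weights,
so the series may be integrated termwise.
-/

open MeasureTheory Real Nat Set Filter Topology Finset

/-- The density of the Erlang law with rate `c` and shape `k + 1`. -/
noncomputable def erlangDensity (c : ℝ) (k : ℕ) (s : ℝ) : ℝ :=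
  c ^ (k + 1) * s ^ k * exp (-(c * s)) / k !

noncomputable def poissonCDF (t : ℝ) (k : ℕ) : ℝ :=
  exp (-t) * ∑ n ∈ range (k + 1), t ^ n / n !

lemma erlangDensity_nonneg {c s : ℝ} (hc : 0 ≤ c) (hs : 0 ≤ s) (k : ℕ) :
    0 ≤ erlangDensity c k s := by
  unfold erlangDensity; positivity

lemma poissonCDF_nonneg {t : ℝ} (ht : 0 ≤ t) (k : ℕ) : 0 ≤ poissonCDF t k := by
  unfold poissonCDF; positivity

lemma poissonCDF_le_one {t : ℝ} (ht : 0 ≤ t) (k : ℕ) : poissonCDF t k ≤ 1 :=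
  calc poissonCDF t k ≤ exp (-t) * exp t := by
        unfold poissonCDF; gcongr; exact sum_le_exp_of_nonneg ht _
    _ = 1 := by rw [← exp_add, neg_add_cancel, exp_zero]

lemma tendsto_poissonCDF_atTop (k : ℕ) : Tendsto (poissonCDF · k) atTop (𝓝 0) := by
  simp only [poissonCDF, mul_sum]
  rw [← sum_const_zero (s := range (k + 1))]
  refine tendsto_finsetSum _ fun n _ => ?_
  simpa only [zero_div] using ((tendsto_pow_mul_exp_neg_atTop_nhds_zero n).div_const
    (n ! : ℝ)).congr fun t => by ring

lemma hasDerivAt_poissonCDF_mul (c : ℝ) (k : ℕ) (s : ℝ) :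
    HasDerivAt (fun s => poissonCDF (c * s) k) (-erlangDensity c k s) s := by
  have hcs : HasDerivAt (fun s => c * s) c s := by simpa using (hasDerivAt_id s).const_mul c
  have hexp : HasDerivAt (fun s => exp (-(c * s))) (-c * exp (-(c * s))) s := by
    simpa [mul_comm] using hcs.neg.exp
  induction k with
  | zero => simpa [poissonCDF, erlangDensity, mul_comm] using hexp
  | succ k ih =>
    have hpow : HasDerivAt (fun s => (c * s) ^ (k + 1) / (k + 1)!)
        (c ^ (k + 1) * s ^ k / k !) s := by
      refine ((hcs.pow (k + 1)).div_const ((k + 1)! : ℝ)).congr_deriv ?_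
      push_cast [Nat.factorial_succ, Nat.add_sub_cancel, mul_pow]
      field_simp
      ring
    unfold poissonCDF at ih ⊢
    simp only [sum_range_succ _ (k + 1), mul_add]
    refine (ih.add (hexp.mul hpow)).congr_deriv ?_
    simp only [erlangDensity]
    push_cast [Nat.factorial_succ]
    field_simp
    ring

lemma integral_Ioi_erlangDensity {c x : ℝ} (hc : 0 < c) (hx : 0 ≤ x) (k : ℕ) :
    IntegrableOn (erlangDensity c k) (Ioi x) ∧
      ∫ s in Ioi x, erlangDensity c k s = poissonCDF (c * x) k := by
  have hderiv : ∀ s ∈ Ici x, HasDerivAt (fun s => -poissonCDF (c * s) k) (erlangDensity c k s) s :=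
    fun s _ => (hasDerivAt_poissonCDF_mul c k s).neg.congr_deriv (neg_neg _)
  have hpos : ∀ s ∈ Ioi x, 0 ≤ erlangDensity c k s :=
    fun s hs => erlangDensity_nonneg hc.le (hx.trans hs.le) k
  have hlim : Tendsto (fun s => -poissonCDF (c * s) k) atTop (𝓝 0) := by
    simpa using ((tendsto_poissonCDF_atTop k).comp (tendsto_id.const_mul_atTop hc)).neg
  refine ⟨integrableOn_Ioi_deriv_of_nonneg' hderiv hpos hlim, ?_⟩
  rw [integral_Ioi_of_hasDerivAt_of_nonneg' hderiv hpos hlim, zero_sub, neg_neg]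

lemma integral_tsum_of_nonneg {α ι : Type*} [MeasurableSpace α] [Countable ι] {μ : Measure α}
    {F : ι → α → ℝ} (hF_int : ∀ i, Integrable (F i) μ) (hF_nonneg : ∀ i, 0 ≤ᵐ[μ] F i)
    (hF_sum : Summable fun i => ∫ a, F i a ∂μ) :
    ∫ a, ∑' i, F i a ∂μ = ∑' i, ∫ a, F i a ∂μ := by
  refine (integral_tsum_of_summable_integral_norm hF_int (hF_sum.congr fun i => ?_)).symm
  exact integral_congr_ae <| (hF_nonneg i).mono fun a ha => (Real.norm_of_nonneg ha).symm

lemma integral_Ioi_tsum_mul_erlangDensity {c x : ℝ} (hc : 0 < c) (hx : 0 ≤ x)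
    {w : ℕ → ℝ} (hw : ∀ l, 0 ≤ w l) (hw_sum : Summable w) (k : ℕ → ℕ) :
    ∫ s in Ioi x, ∑' l, w l * erlangDensity c (k l) s =
      ∑' l, w l * poissonCDF (c * x) (k l) := by
  have hcx : 0 ≤ c * x := mul_nonneg hc.le hx
  have hterm : ∀ l, ∫ s in Ioi x, w l * erlangDensity c (k l) s =
      w l * poissonCDF (c * x) (k l) := fun l => by
    rw [integral_const_mul, (integral_Ioi_erlangDensity hc hx (k l)).2]
  have hsum : Summable fun l => w l * poissonCDF (c * x) (k l) :=
    hw_sum.of_nonneg_of_le (fun l => mul_nonneg (hw l) (poissonCDF_nonneg hcx _))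
      (fun l => mul_le_of_le_one_right (hw l) (poissonCDF_le_one hcx _))
  rw [integral_tsum_of_nonneg
    (fun l => (integral_Ioi_erlangDensity hc hx (k l)).1.const_mul (w l))
    (fun l => ae_restrict_of_forall_mem measurableSet_Ioi fun s hs =>
      mul_nonneg (hw l) (erlangDensity_nonneg hc.le (hx.trans hs.le) _))
    (hsum.congr fun l => (hterm l).symm)]
  exact tsum_congr hterm

lemma kappaMu_series_term_eq_mul_erlangDensity {θ₁ θ₂ ϑ : ℝ} (hϑ : ϑ ≠ 0) {μ : ℕ} (hμ : 0 < μ)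
    (l : ℕ) (s : ℝ) :
    θ₁ ^ μ * exp (-θ₂) / ϑ ^ μ *
        ((θ₁ ^ l * θ₂ ^ l) / (ϑ ^ l * ((μ + l - 1)! : ℝ) * (l ! : ℝ)) *
          s ^ (μ - 1 + l) * exp (-θ₁ * s / ϑ)) =
      exp (-θ₂) * (θ₂ ^ l / l !) * erlangDensity (θ₁ / ϑ) (μ - 1 + l) s := by
  rw [erlangDensity, show μ - 1 + l + 1 = μ + l by omega, show μ + l - 1 = μ - 1 + l by omega,
    show -θ₁ * s / ϑ = -(θ₁ / ϑ * s) by ring, div_pow]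
  field_simp
  ring

/-- **Received power statistics (Lemma 1).** If `f` is the κ-μ power fading density of the
received power (with integer shape parameter `μ`, written via the series expansion of the
modified Bessel function), then its upper-tail integral (CCDF) is given by the stated double
series. -/
theorem received_power_ccdf
    (θ₁ θ₂ ϑ : ℝ) (hθ₁ : 0 < θ₁) (hθ₂ : 0 ≤ θ₂) (hϑ : 0 < ϑ)
    (μ : ℕ) (hμ : 0 < μ)
    (f : ℝ → ℝ)
    (hf : ∀ s : ℝ, 0 ≤ s → f s =
      (θ₁ ^ μ * Real.exp (-θ₂) / ϑ ^ μ) *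
        ∑' l : ℕ, (θ₁ ^ l * θ₂ ^ l) / (ϑ ^ l * ((μ + l - 1)! : ℝ) * (l ! : ℝ)) *
          s ^ (μ - 1 + l) * Real.exp (-θ₁ * s / ϑ)) :
    ∀ x : ℝ, 0 ≤ x →
      ∫ s in Set.Ioi x, f s =
        Real.exp (-θ₂) *
          ∑' l : ℕ, (θ₂ ^ l / (l ! : ℝ)) *
            ∑ n ∈ Finset.range (l + μ),
              (1 / (n ! : ℝ)) * (θ₁ * x / ϑ) ^ n * Real.exp (-(θ₁ * x / ϑ)) := by
  intro x hx
  have hf_mixture : ∀ s ∈ Ioi x,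
      f s = ∑' l, exp (-θ₂) * (θ₂ ^ l / l !) * erlangDensity (θ₁ / ϑ) (μ - 1 + l) s := by
    intro s hs
    simp only [hf s (hx.trans hs.le), ← tsum_mul_left,
      kappaMu_series_term_eq_mul_erlangDensity hϑ.ne' hμ]
  rw [setIntegral_congr_fun measurableSet_Ioi hf_mixture,
    integral_Ioi_tsum_mul_erlangDensity (div_pos hθ₁ hϑ) hx (fun l => by positivity)
      ((summable_pow_div_factorial θ₂).mul_left _), ← tsum_mul_left]
  refine tsum_congr fun l => ?_
  rw [poissonCDF, show μ - 1 + l + 1 = l + μ by omega, div_mul_eq_mul_div]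
  simp only [mul_sum]
  exact sum_congr rfl fun n _ => by ring
end

section
/- Let θ₁ > 0, θ₂ ≥ 0 be real, μ a positive integer, k a natural number, and s ≥ 0 a real number. With f_H the κ-μ power fading density with parameters θ₁, θ₂, μ, one has ∫_0^∞ h^k e^{-s h} f_H(h) dh = (μ)_k · θ₁^μ · e^{-θ₂} · (s + θ₁)^{-(k+μ)} · ₁F₁(k+μ; μ; θ₁θ₂/(s+θ₁)), where (μ)_k is the ascending Pochhammer symbol. -/
/-! Expanding `f_H` as a Poisson mixture of Gamma densities, `h^k e^{-sh} f_H(h)` becomes a series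
of terms `c_l h^{μ+k+l-1} e^{-(s+θ₁)h}`, whose integrals are `c_l (μ+k+l-1)! / (s+θ₁)^{μ+k+l}`.
The series of absolute values converges because `(μ+k+l-1)!/(μ+l-1)! ≤ 2^{μ+k+l-1} k!`, so the
integral may be taken termwise, and `(μ)_k (k+μ)_l / (μ)_l = (μ+k+l-1)!/(μ+l-1)!` identifies the
result with the `₁F₁` series. -/

open MeasureTheory Real Nat Polynomial

noncomputable def hyp1F1 (a b x : ℝ) : ℝ :=
  ∑' j : ℕ, ((ascPochhammer ℝ j).eval a / (ascPochhammer ℝ j).eval b) * x ^ j / (j ! : ℝ)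

lemma integral_pow_mul_exp_neg_mul_Ioi (n : ℕ) {r : ℝ} (hr : 0 < r) :
    ∫ t in Set.Ioi (0 : ℝ), t ^ n * exp (-(r * t)) = n ! / r ^ (n + 1) := by
  have h := integral_rpow_mul_exp_neg_mul_Ioi (a := n + 1) (by positivity) hr
  rw [add_sub_cancel_right, Gamma_nat_eq_factorial, one_div, inv_rpow hr.le,
    ← Nat.cast_succ, rpow_natCast] at h
  simpa only [rpow_natCast, ← div_eq_inv_mul] using h

lemma integrableOn_pow_mul_exp_neg_mul_Ioi (n : ℕ) {r : ℝ} (hr : 0 < r) :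
    IntegrableOn (fun t : ℝ => t ^ n * exp (-(r * t))) (Set.Ioi 0) := by
  simpa only [rpow_one, rpow_natCast, neg_mul] using
    integrableOn_rpow_mul_exp_neg_mul_rpow (s := n) (by linarith [n.cast_nonneg (α := ℝ)])
      one_pos hr

lemma integral_tsum_mul_pow_mul_exp_neg_mul_Ioi {a : ℕ → ℝ} {n : ℕ} {r : ℝ} (hr : 0 < r)
    (ha : Summable fun l => |a l| * ((n + l)! / r ^ (n + l + 1))) :
    ∫ t in Set.Ioi (0 : ℝ), ∑' l, a l * (t ^ (n + l) * exp (-(r * t))) =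
      ∑' l, a l * ((n + l)! / r ^ (n + l + 1)) := by
  have hnorm : ∀ l, ∫ t in Set.Ioi (0 : ℝ), ‖a l * (t ^ (n + l) * exp (-(r * t)))‖ =
      |a l| * ((n + l)! / r ^ (n + l + 1)) := fun l => by
    rw [← integral_pow_mul_exp_neg_mul_Ioi _ hr, ← integral_const_mul]
    refine setIntegral_congr_fun measurableSet_Ioi fun t ht => ?_
    rw [norm_mul, Real.norm_eq_abs, Real.norm_of_nonneg (by have := ht.out.le; positivity)]
  rw [← integral_tsum_of_summable_integral_norm
    (fun l => (integrableOn_pow_mul_exp_neg_mul_Ioi _ hr).const_mul _) (by simpa only [hnorm])]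
  simp only [integral_const_mul, integral_pow_mul_exp_neg_mul_Ioi _ hr]

lemma factorial_add_add_le (m k l : ℕ) : (m + k + l)! ≤ 2 ^ (m + k + l) * k ! * (m + l)! := by
  calc (m + k + l)! = (m + l + k).choose k * k ! * (m + l)! := by
        rw [show m + k + l = m + l + k by ring, ← Nat.add_choose_mul_factorial_mul_factorial]
        ring
    _ ≤ 2 ^ (m + k + l) * k ! * (m + l)! := by
        gcongr
        exact (show m + l + k = m + k + l by ring) ▸ Nat.choose_le_two_pow _ _

lemma summable_factorial_div_mul_pow (m k : ℕ) (y : ℝ) :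
    Summable fun l : ℕ => ((m + k + l)! : ℝ) / ((m + l)! * l !) * y ^ l := by
  refine Summable.of_norm_bounded
    ((summable_pow_div_factorial (2 * |y|)).mul_left ((2 : ℝ) ^ (m + k) * k !)) fun l => ?_
  have hfac : ((m + k + l)! : ℝ) ≤ 2 ^ (m + k + l) * k ! * (m + l)! := by
    exact_mod_cast factorial_add_add_le m k l
  rw [Real.norm_eq_abs, abs_mul, abs_pow, abs_of_nonneg (by positivity)]
  calc ((m + k + l)! : ℝ) / ((m + l)! * l !) * |y| ^ l
      ≤ 2 ^ (m + k + l) * k ! * (m + l)! / ((m + l)! * l !) * |y| ^ l := by gcongr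
    _ = 2 ^ (m + k) * k ! * ((2 * |y|) ^ l / l !) := by
        field_simp
        ring

lemma ascPochhammer_eval_natCast_succ {K : Type*} [Field K] [CharZero K] (m k : ℕ) :
    (ascPochhammer K k).eval ((m + 1 : ℕ) : K) = (m + k)! / m ! := by
  rw [ascPochhammer_nat_eq_natCast_ascFactorial,
    eq_div_iff (Nat.cast_ne_zero.mpr m.factorial_ne_zero), mul_comm]
  exact_mod_cast Nat.factorial_mul_ascFactorial m k

theorem kappa_mu_weighted_laplace_transform_general
    (θ₁ θ₂ : ℝ) (hθ₁ : 0 < θ₁) (μ : ℕ) (hμ : 0 < μ)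
    (k : ℕ) (s : ℝ) (hs : 0 ≤ s)
    (fH : ℝ → ℝ)
    (hfH : ∀ h : ℝ, 0 ≤ h → fH h =
      θ₁ ^ μ * Real.exp (-θ₂) *
        ∑' l : ℕ, (θ₁ * θ₂) ^ l / (((μ + l - 1)! : ℝ) * (l ! : ℝ)) *
          h ^ (μ + l - 1) * Real.exp (-θ₁ * h)) :
    ∫ h in Set.Ioi (0 : ℝ), h ^ k * Real.exp (-s * h) * fH h =
      (ascPochhammer ℝ k).eval (μ : ℝ) * θ₁ ^ μ * Real.exp (-θ₂) *
        ((s + θ₁) ^ (k + μ))⁻¹ * hyp1F1 ((k : ℝ) + (μ : ℝ)) (μ : ℝ) (θ₁ * θ₂ / (s + θ₁)) := by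
  obtain ⟨m, rfl⟩ := Nat.exists_eq_add_one_of_ne_zero hμ.ne'
  have hr : 0 < s + θ₁ := by positivity
  set c : ℕ → ℝ := fun l => θ₁ ^ (m + 1) * exp (-θ₂) * ((θ₁ * θ₂) ^ l / ((m + l)! * l !))
  have hintegrand : ∀ h ∈ Set.Ioi (0 : ℝ), h ^ k * exp (-s * h) * fH h =
      ∑' l, c l * (h ^ (m + k + l) * exp (-((s + θ₁) * h))) := fun h hh => by
    rw [hfH h hh.out.le, ← tsum_mul_left, ← tsum_mul_left]
    refine tsum_congr fun l => ?_
    rw [show m + 1 + l - 1 = m + l by omega, show m + k + l = k + (m + l) by ring,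
      pow_add h, show -((s + θ₁) * h) = -s * h + -θ₁ * h by ring, exp_add]
    ring
  have hsum : Summable fun l => |c l| * ((m + k + l)! / (s + θ₁) ^ (m + k + l + 1)) := by
    refine ((summable_factorial_div_mul_pow m k (|θ₁ * θ₂| / (s + θ₁))).mul_left
      (θ₁ ^ (m + 1) * exp (-θ₂) / (s + θ₁) ^ (m + k + 1))).congr fun l => ?_
    simp only [c, abs_mul, abs_div, abs_pow, Nat.abs_cast, abs_of_pos hθ₁, abs_exp]
    rw [div_pow]
    field_simp
    ring
  rw [setIntegral_congr_fun measurableSet_Ioi hintegrand,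
    integral_tsum_mul_pow_mul_exp_neg_mul_Ioi hr hsum, hyp1F1, ← tsum_mul_left]
  refine tsum_congr fun l => ?_
  rw [show (k : ℝ) + ((m + 1 : ℕ) : ℝ) = ((m + k + 1 : ℕ) : ℝ) by push_cast; ring,
    ascPochhammer_eval_natCast_succ, ascPochhammer_eval_natCast_succ,
    ascPochhammer_eval_natCast_succ, show m + k + l + 1 = k + (m + 1) + l by ring, pow_add, div_pow]
  simp only [c]
  field_simp

/-- The weighted Laplace transform `E[H^k e^(-sH)]` of κ-μ power fading with positive integer
shape parameter `μ`: step (c) in the proof of Lemma 2 (Appendix B). -/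
theorem kappa_mu_weighted_laplace_transform
    (θ₁ θ₂ : ℝ) (hθ₁ : 0 < θ₁) (hθ₂ : 0 ≤ θ₂) (μ : ℕ) (hμ : 0 < μ)
    (k : ℕ) (s : ℝ) (hs : 0 ≤ s)
    (fH : ℝ → ℝ)
    (hfH : ∀ h : ℝ, 0 ≤ h → fH h =
      θ₁ ^ μ * Real.exp (-θ₂) *
        ∑' l : ℕ, (θ₁ * θ₂) ^ l / (((μ + l - 1)! : ℝ) * (l ! : ℝ)) *
          h ^ (μ + l - 1) * Real.exp (-θ₁ * h)) :
    ∫ h in Set.Ioi (0 : ℝ), h ^ k * Real.exp (-s * h) * fH h =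
      (ascPochhammer ℝ k).eval (μ : ℝ) * θ₁ ^ μ * Real.exp (-θ₂) *
        ((s + θ₁) ^ (k + μ))⁻¹ * hyp1F1 ((k : ℝ) + (μ : ℝ)) (μ : ℝ) (θ₁ * θ₂ / (s + θ₁)) :=
  kappa_mu_weighted_laplace_transform_general θ₁ θ₂ hθ₁ μ hμ k s hs fH hfH
end

section
/- Let X be an integrable real-valued random variable on a probability space and β ∈ (0, 1). Define φ(u) = u + (1-β)^{-1} E[max(X - u, 0)] for u ∈ ℝ, and let q = inf{u ∈ ℝ : P(X ≤ u) ≥ β} be the β-quantile of X. Then φ(q) ≤ φ(u) for every u ∈ ℝ; that is, the β-quantile minimizes φ. -/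
open MeasureTheory ProbabilityTheory Real

/-!
Write `g t = E (X - t)⁺`. Then `φ t` is the positive multiple `(1 - β)⁻¹ (g t + (1 - β) t)`,
and `g` is convex with right and left slopes `-P(X > q)` and `-P(X ≥ q)` at `q`.
Right-continuity of the distribution function gives `P(X ≤ q) ≥ β` and `P(X < q) ≤ β`, so
`-(1 - β)` lies between these slopes, i.e. it is a subgradient of `g` at `q`, which is exactly
minimality of `φ` at `q`.
-/

open Set Filter Function

section PositivePart

lemma max_sub_le_max_sub_add_indicator {q u : ℝ} (h : q ≤ u) (x : ℝ) :
    max (x - q) 0 ≤ max (x - u) 0 + (Ioi q).indicator (fun _ ↦ u - q) x := by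
  by_cases hx : x ∈ Ioi q
  · rw [indicator_of_mem hx]
    have := le_max_left (x - u) 0
    have := le_max_right (x - u) 0
    exact max_le (by linarith) (by linarith)
  · rw [indicator_of_notMem hx, add_zero, max_eq_right (by simpa using hx)]
    exact le_max_right _ _

lemma max_sub_add_indicator_le_max_sub {u q : ℝ} (h : u ≤ q) (x : ℝ) :
    max (x - q) 0 + (Ici q).indicator (fun _ ↦ q - u) x ≤ max (x - u) 0 := by
  by_cases hx : x ∈ Ici q
  · rw [indicator_of_mem hx, max_eq_left (sub_nonneg.2 hx)]
    exact le_max_of_le_left (by linarith)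
  · rw [indicator_of_notMem hx, add_zero]
    exact max_le_max_right 0 (by linarith)

variable {μ : Measure ℝ} [IsFiniteMeasure μ]

lemma integrable_max_sub (hμ : Integrable id μ) (t : ℝ) :
    Integrable (fun x ↦ max (x - t) 0) μ :=
  (hμ.sub (integrable_const t)).pos_part

lemma integral_max_sub_le {q u : ℝ} (hμ : Integrable id μ) (h : q ≤ u) :
    ∫ x, max (x - q) 0 ∂μ ≤ ∫ x, max (x - u) 0 ∂μ + (u - q) * μ.real (Ioi q) := by
  have hind := (integrable_const (μ := μ) (u - q)).indicator (measurableSet_Ioi (a := q))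
  calc ∫ x, max (x - q) 0 ∂μ
      ≤ ∫ x, (max (x - u) 0 + (Ioi q).indicator (fun _ ↦ u - q) x) ∂μ :=
        integral_mono (integrable_max_sub hμ q) ((integrable_max_sub hμ u).add hind)
          (max_sub_le_max_sub_add_indicator h)
    _ = ∫ x, max (x - u) 0 ∂μ + (u - q) * μ.real (Ioi q) := by
        rw [integral_add (integrable_max_sub hμ u) hind,
          integral_indicator_const _ measurableSet_Ioi, smul_eq_mul, mul_comm]

lemma integral_max_sub_add_le {u q : ℝ} (hμ : Integrable id μ) (h : u ≤ q) :
    ∫ x, max (x - q) 0 ∂μ + (q - u) * μ.real (Ici q) ≤ ∫ x, max (x - u) 0 ∂μ := by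
  have hind := (integrable_const (μ := μ) (q - u)).indicator (measurableSet_Ici (a := q))
  calc ∫ x, max (x - q) 0 ∂μ + (q - u) * μ.real (Ici q)
      = ∫ x, (max (x - q) 0 + (Ici q).indicator (fun _ ↦ q - u) x) ∂μ := by
        rw [integral_add (integrable_max_sub hμ q) hind,
          integral_indicator_const _ measurableSet_Ici, smul_eq_mul, mul_comm]
    _ ≤ ∫ x, max (x - u) 0 ∂μ :=
        integral_mono ((integrable_max_sub hμ q).add hind) (integrable_max_sub hμ u)
          (max_sub_add_indicator_le_max_sub h)

lemma integral_max_sub_add_mul_le {c q : ℝ} (hμ : Integrable id μ)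
    (hc_le : μ.real (Ioi q) ≤ c) (hc_ge : c ≤ μ.real (Ici q)) (u : ℝ) :
    ∫ x, max (x - q) 0 ∂μ + c * q ≤ ∫ x, max (x - u) 0 ∂μ + c * u := by
  rcases le_total q u with h | h
  · have := integral_max_sub_le hμ h
    nlinarith [mul_le_mul_of_nonneg_left hc_le (sub_nonneg.2 h)]
  · have := integral_max_sub_add_le hμ h
    nlinarith [mul_le_mul_of_nonneg_left hc_ge (sub_nonneg.2 h)]

end PositivePart

namespace StieltjesFunction

variable (f : StieltjesFunction ℝ) {β : ℝ}

lemma le_apply_sInf_setOf_le (hne : {u | β ≤ f u}.Nonempty) :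
    β ≤ f (sInf {u | β ≤ f u}) := by
  rw [← f.iInf_Ioi_eq]
  refine le_ciInf fun r ↦ ?_
  obtain ⟨s, hs, hsr⟩ := exists_lt_of_csInf_lt hne r.2
  exact hs.trans (f.mono hsr.le)

lemma leftLim_sInf_setOf_le_le (hbdd : BddBelow {u | β ≤ f u}) :
    leftLim f (sInf {u | β ≤ f u}) ≤ β := by
  rw [f.mono.leftLim_eq_sSup]
  refine csSup_le (nonempty_Iio.image f) ?_
  rintro _ ⟨u, hu, rfl⟩
  exact (not_le.1 fun h ↦ (not_le.2 hu) (csInf_le hbdd h)).le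

end StieltjesFunction

section Quantile

variable (μ : Measure ℝ)

noncomputable def quantile (β : ℝ) : ℝ := sInf {u | β ≤ cdf μ u}

variable {β : ℝ}

lemma nonempty_setOf_le_cdf (hβ : β < 1) : {u | β ≤ cdf μ u}.Nonempty :=
  ((tendsto_cdf_atTop μ).eventually (eventually_ge_nhds hβ)).exists

lemma bddBelow_setOf_le_cdf (hβ : 0 < β) : BddBelow {u | β ≤ cdf μ u} := by
  obtain ⟨a, ha⟩ :=
    eventually_atBot.1 ((tendsto_cdf_atBot μ).eventually (eventually_lt_nhds hβ))
  exact ⟨a, fun u hu ↦ le_of_not_ge fun hua ↦ (ha u hua).not_ge hu⟩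

variable [IsProbabilityMeasure μ]

lemma measureReal_Ioi_quantile_le (hβ : β ∈ Ioo 0 1) :
    μ.real (Ioi (quantile μ β)) ≤ 1 - β := by
  rw [quantile, ← compl_Iic, probReal_compl_eq_one_sub measurableSet_Iic, ← cdf_eq_real]
  linarith [(cdf μ).le_apply_sInf_setOf_le (nonempty_setOf_le_cdf μ hβ.2)]

lemma one_sub_le_measureReal_Ici_quantile (hβ : β ∈ Ioo 0 1) :
    1 - β ≤ μ.real (Ici (quantile μ β)) := by
  have hIio : μ.real (Iio (quantile μ β)) ≤ β := by
    refine ENNReal.toReal_le_of_le_ofReal hβ.1.le ?_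
    have h := (cdf μ).measure_Iio (tendsto_cdf_atBot μ) (quantile μ β)
    rw [measure_cdf, sub_zero] at h
    rw [h]
    exact ENNReal.ofReal_le_ofReal
      ((cdf μ).leftLim_sInf_setOf_le_le (bddBelow_setOf_le_cdf μ hβ.1))
  rw [← compl_Iio, probReal_compl_eq_one_sub measurableSet_Iio]
  linarith

end Quantile

/-- Variational characterization of the quantile used in Equation (9) of the paper: the
`β`-quantile of an integrable random variable `X` minimizes
`u ↦ u + (1-β)⁻¹ E[max(X - u, 0)]`. -/
theorem quantile_minimizes_cvar_objective
    {Ω : Type*} [MeasureSpace Ω] [IsProbabilityMeasure (ℙ : Measure Ω)]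
    (X : Ω → ℝ) (hX : Integrable X) (β : ℝ) (hβ : β ∈ Set.Ioo (0 : ℝ) 1)
    (φ : ℝ → ℝ)
    (hφ : ∀ u : ℝ, φ u = u + (1 - β)⁻¹ * ∫ ω, max (X ω - u) 0)
    (q : ℝ)
    (hq : q = sInf {u : ℝ | ENNReal.ofReal β ≤ ℙ {ω | X ω ≤ u}}) :
    ∀ u : ℝ, φ q ≤ φ u := by
  set μ : Measure ℝ := (ℙ : Measure Ω).map X
  have : IsProbabilityMeasure μ := Measure.isProbabilityMeasure_map hX.aemeasurable
  have hμ : Integrable id μ :=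
    (integrable_map_measure aestronglyMeasurable_id hX.aemeasurable).2 hX
  have hq_quantile : q = quantile μ β := by
    rw [hq, quantile]
    congr 1
    ext u
    rw [mem_ofPred_eq, mem_ofPred_eq, ← ENNReal.ofReal_le_ofReal_iff (cdf_nonneg μ u),
      ofReal_cdf, Measure.map_apply_of_aemeasurable hX.aemeasurable measurableSet_Iic]
    rfl
  have hφ_law (t : ℝ) : φ t = (1 - β)⁻¹ * (∫ x, max (x - t) 0 ∂μ + (1 - β) * t) := by
    rw [hφ, integral_map hX.aemeasurable (by fun_prop)]
    field_simp [(sub_pos.2 hβ.2).ne']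
    ring
  intro u
  rw [hφ_law, hφ_law, hq_quantile]
  exact mul_le_mul_of_nonneg_left (integral_max_sub_add_mul_le hμ
    (measureReal_Ioi_quantile_le μ hβ) (one_sub_le_measureReal_Ici_quantile μ hβ) u)
    (inv_pos.2 (sub_pos.2 hβ.2)).le
end
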